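/- Integral coisotropic submanifolds are not stable under small coisotropic deformations; concretely: there is a family of coisotropic pairs (f_t, g_t) = (t·sin x1, 0), t ∈ ℝ, jointly smooth in (t,x), with (f_0, g_0) = (0, 0), such that for the undeformed value t = 0 the leaf-through-the-origin Γ_0 = {([0], [0], [0], [u], [v]) : u, v ∈ ℝ} ⊆ (ℝ/2πℤ)^5 is compact (a 2-torus), while for every irrational t the corresponding set Γ_t = {([0], [−t·u], [0], [u], [v]) : u, v ∈ ℝ} is not compact. Hence in every neighborhood of t = 0 there are values of t for which the deformed coisotropic submanifold fails to be integral. -/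
import Mathlib


/-- Partial derivative of `f : ℝ^5 → ℝ` in the `i`-th coordinate direction. -/
noncomputable def pd (f : (Fin 5 → ℝ) → ℝ) (i : Fin 5) (p : Fin 5 → ℝ) : ℝ :=
  fderiv ℝ f p (Pi.single i 1)

/-- `X(h) = cos x1 · ∂h/∂x2 − sin x1 · ∂h/∂x3`. -/
noncomputable def Xop (f : (Fin 5 → ℝ) → ℝ) (p : Fin 5 → ℝ) : ℝ :=
  Real.cos (p 0) * pd f 1 p - Real.sin (p 0) * pd f 2 p

/-- `Y(h) = sin x1 · ∂h/∂x2 + cos x1 · ∂h/∂x3`. -/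
noncomputable def Yop (f : (Fin 5 → ℝ) → ℝ) (p : Fin 5 → ℝ) : ℝ :=
  Real.sin (p 0) * pd f 1 p + Real.cos (p 0) * pd f 2 p

/-- `f` is `2π`-periodic in each of the five variables. -/
def Periodic5 (f : (Fin 5 → ℝ) → ℝ) : Prop :=
  ∀ (p : Fin 5 → ℝ) (i : Fin 5), f (p + Pi.single i (2 * Real.pi)) = f p

/-- A coisotropic pair: two smooth `2π`-periodic functions satisfying the
coisotropicity PDE (★): `∂f/∂x1 · X(g) − ∂g/∂x1 · X(f) = ∂g/∂x4 − ∂f/∂x5 + g·Y(f) − f·Y(g)`. -/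
def CoisotropicPair (f g : (Fin 5 → ℝ) → ℝ) : Prop :=
  ContDiff ℝ (⊤ : ℕ∞) f ∧ ContDiff ℝ (⊤ : ℕ∞) g ∧ Periodic5 f ∧ Periodic5 g ∧
  ∀ p : Fin 5 → ℝ,
    pd f 0 p * Xop g p - pd g 0 p * Xop f p
      = pd g 3 p - pd f 4 p + g p * Yop f p - f p * Yop g p


/-- The leaf through the origin of the characteristic foliation `F'_t` inside the 5-torus
`(ℝ/2πℤ)^5`: the subgroup `{([0], [−t·u], [0], [u], [v]) : u, v ∈ ℝ}`. -/
def leafGroup (t : ℝ) : Set (Fin 5 → AddCircle (2 * Real.pi)) :=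
  {x | ∃ u v : ℝ,
    x = ![(0 : AddCircle (2 * Real.pi)), ((-t * u : ℝ) : AddCircle (2 * Real.pi)),
          (0 : AddCircle (2 * Real.pi)), ((u : ℝ) : AddCircle (2 * Real.pi)),
          ((v : ℝ) : AddCircle (2 * Real.pi))]}

/- ## Auxiliary lemmas -/

lemma pd_tsin (t : ℝ) (i : Fin 5) (p : Fin 5 → ℝ) :
    pd (fun p => t * Real.sin (p 0)) i p
      = t * Real.cos (p 0) * (Pi.single i (1:ℝ) : Fin 5 → ℝ) 0 := by
  have h1 : HasFDerivAt (fun p : Fin 5 → ℝ => p 0)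
      (ContinuousLinearMap.proj 0 : (Fin 5 → ℝ) →L[ℝ] ℝ) p :=
    (ContinuousLinearMap.proj (R := ℝ) (φ := fun _ : Fin 5 => ℝ) 0).hasFDerivAt
  have h2 : HasDerivAt Real.sin (Real.cos (p 0)) (p 0) := Real.hasDerivAt_sin _
  have h3 := h2.comp_hasFDerivAt p h1
  have h4 := h3.const_mul t
  have h5 : HasFDerivAt (fun p : Fin 5 → ℝ => t * Real.sin (p 0))
      (t • Real.cos (p 0) • (ContinuousLinearMap.proj 0 : (Fin 5 → ℝ) →L[ℝ] ℝ)) p := h4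
  rw [pd, h5.fderiv]
  simp [mul_assoc]

lemma pd_zerofun (i : Fin 5) (p : Fin 5 → ℝ) : pd (fun _ => (0:ℝ)) i p = 0 := by
  simp [pd]

lemma tsin_smooth (t : ℝ) : ContDiff ℝ (⊤ : ℕ∞) (fun p : Fin 5 → ℝ => t * Real.sin (p 0)) :=
  contDiff_const.mul (Real.contDiff_sin.comp
    ((ContinuousLinearMap.proj 0 : (Fin 5 → ℝ) →L[ℝ] ℝ).contDiff))

lemma coisopair (t : ℝ) :
    CoisotropicPair (fun p => t * Real.sin (p 0)) (fun _ => 0) := by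
  refine ⟨tsin_smooth t, contDiff_const, ?_, ?_, ?_⟩
  · intro p i
    rcases eq_or_ne i 0 with rfl | hi
    · simp [Real.sin_add_two_pi]
    · simp [Pi.single_eq_of_ne (Ne.symm hi)]
  · intro p i; rfl
  · intro p
    simp only [Xop, Yop, pd_zerofun, pd_tsin]
    have h4 : (Pi.single (4 : Fin 5) (1:ℝ) : Fin 5 → ℝ) 0 = 0 :=
      Pi.single_eq_of_ne (by decide) _
    rw [h4]
    ring

lemma coe_eq_zero_of_int (k : ℤ) (x : ℝ) (h : x = k • (2 * Real.pi)) :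
    (x : AddCircle (2 * Real.pi)) = 0 :=
  AddCircle.coe_eq_zero_iff _ |>.mpr ⟨k, h.symm⟩

lemma coe_eq_coe_of_sub {a b : ℝ} {k : ℤ} (h : a - b = k • (2 * Real.pi)) :
    (a : AddCircle (2 * Real.pi)) = b := by
  have : a = b + (k • (2 * Real.pi) : ℝ) := by rw [← h]; ring
  rw [this, AddCircle.coe_add, coe_eq_zero_of_int k _ rfl, add_zero]

lemma leaf_zero_compact : IsCompact (leafGroup 0) := by
  haveI : Fact (0 < 2 * Real.pi) := ⟨by positivity⟩
  have hmap : Continuous (fun ab : AddCircle (2 * Real.pi) × AddCircle (2 * Real.pi) =>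
      (![0, 0, 0, ab.1, ab.2] : Fin 5 → AddCircle (2 * Real.pi))) := by
    refine continuous_pi fun i => ?_
    fin_cases i <;> simp <;> [exact continuous_const; exact continuous_const;
      exact continuous_const; exact continuous_fst; exact continuous_snd]
  have : leafGroup 0 = Set.range (fun ab : AddCircle (2 * Real.pi) × AddCircle (2 * Real.pi) =>
      (![0, 0, 0, ab.1, ab.2] : Fin 5 → AddCircle (2 * Real.pi))) := by
    ext x
    constructor
    · rintro ⟨u, v, rfl⟩
      exact ⟨((u : AddCircle (2 * Real.pi)), (v : AddCircle (2 * Real.pi))), by norm_num⟩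
    · rintro ⟨⟨a, b⟩, rfl⟩
      obtain ⟨u, rfl⟩ := QuotientAddGroup.mk_surjective a
      obtain ⟨v, rfl⟩ := QuotientAddGroup.mk_surjective b
      exact ⟨u, v, by norm_num⟩
  rw [this]
  exact isCompact_range hmap

lemma leaf_irrational_not_compact {t : ℝ} (ht : Irrational t) :
    ¬ IsCompact (leafGroup t) := by
  intro hK
  set P := 2 * Real.pi with hP
  have hπ : (0:ℝ) < Real.pi := Real.pi_pos
  let c : ℝ → (Fin 5 → AddCircle P) := fun s => ![0, (s : AddCircle P), 0, 0, 0]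
  have hc : Continuous c := by
    refine continuous_pi fun i => ?_
    fin_cases i <;> simp <;>
      [exact continuous_const; exact (AddCircle.continuous_mk' P);
       exact continuous_const; exact continuous_const; exact continuous_const]
  -- the subgroup generated by 2π and 2πt is dense
  set S : AddSubgroup ℝ := AddSubgroup.zmultiples P ⊔ AddSubgroup.zmultiples (P * t) with hS
  have hdense : Dense (S : Set ℝ) := by
    rcases S.dense_or_cyclic with h | ⟨a, ha⟩
    · exact h
    · exfalso
      have h1 : P ∈ S := AddSubgroup.mem_sup_left (AddSubgroup.mem_zmultiples _)
      have h2 : P * t ∈ S := AddSubgroup.mem_sup_right (AddSubgroup.mem_zmultiples _)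
      rw [ha, ← AddSubgroup.zmultiples_eq_closure, AddSubgroup.mem_zmultiples_iff] at h1 h2
      obtain ⟨n, hn⟩ := h1
      obtain ⟨m, hm⟩ := h2
      have hP0 : P ≠ 0 := by positivity
      rw [zsmul_eq_mul] at hn hm
      have hn0 : (n : ℝ) ≠ 0 := by
        rintro h0
        rw [h0, zero_mul] at hn
        exact hP0 hn.symm
      have ha0 : a ≠ 0 := by
        rintro rfl
        rw [mul_zero] at hn
        exact hP0 hn.symm
      apply ht
      refine ⟨(m : ℚ) / (n : ℚ), ?_⟩
      have h : t = (m : ℝ) * a / ((n : ℝ) * a) := by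
        rw [hn, hm, mul_comm P t, mul_div_assoc, div_self hP0, mul_one]
      push_cast
      rw [h, mul_div_mul_right _ _ ha0]
  -- π is in the closure of S, hence c π is in the closure of the leaf
  have hmaps : Set.MapsTo c (S : Set ℝ) (leafGroup t) := by
    rintro s hs
    have hs2 : s ∈ AddSubgroup.zmultiples P ⊔ AddSubgroup.zmultiples (P * t) := hs
    obtain ⟨y, hy, z, hz, hyz⟩ := AddSubgroup.mem_sup.mp hs2
    rw [AddSubgroup.mem_zmultiples_iff] at hy hz
    obtain ⟨k, rfl⟩ := hy
    obtain ⟨l, rfl⟩ := hz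
    refine ⟨-(P * l), 0, ?_⟩
    have e1 : ((-(P * l) : ℝ) : AddCircle P) = ((0:ℝ) : AddCircle P) := by
      refine coe_eq_coe_of_sub (k := -l) ?_
      simp only [zsmul_eq_mul]; push_cast; ring
    have e2 : ((s : ℝ) : AddCircle P) = ((-t * -(P * l) : ℝ) : AddCircle P) := by
      refine coe_eq_coe_of_sub (k := k) ?_
      rw [← hyz]; simp only [zsmul_eq_mul]; ring
    funext i
    fin_cases i <;>
      simp only [c, Matrix.cons_val_zero, Matrix.cons_val_one, Matrix.head_cons,
        Matrix.cons_val_two, Matrix.cons_val_three, Matrix.cons_val_four,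
        Matrix.tail_cons] <;>
      [rfl; exact e2; rfl;
       (rw [← QuotientAddGroup.mk_zero]; exact e1.symm); rfl]
  have hmem : c Real.pi ∈ closure (leafGroup t) :=
    map_mem_closure hc (hdense Real.pi) hmaps
  rw [hK.isClosed.closure_eq] at hmem
  -- but c π is not in the leaf
  obtain ⟨u, v, hx⟩ := hmem
  have h3 : ((0:ℝ) : AddCircle P) = ((u : ℝ) : AddCircle P) := by
    have := congrFun hx 3
    simpa [c] using this
  have h1 : ((Real.pi : ℝ) : AddCircle P) = ((-t * u : ℝ) : AddCircle P) := by
    have := congrFun hx 1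
    simpa [c] using this
  rw [eq_comm, ← sub_eq_zero, ← AddCircle.coe_sub, AddCircle.coe_eq_zero_iff] at h3 h1
  obtain ⟨n, hn⟩ := h3
  obtain ⟨m, hm⟩ := h1
  rw [zsmul_eq_mul] at hn hm
  -- hn : n * P = u - 0, hm : m * P = -t*u - π
  have hu : u = n * P := by linarith
  have key : -t * (n * P) - Real.pi = m * P := by rw [← hu]; linarith
  rw [hP] at key
  have key2 : (-t * (2 * n) - 1 - 2 * m) * Real.pi = 0 := by ring_nf; ring_nf at key; linarith
  have key3 : -t * (2 * n) - 1 - 2 * m = 0 := by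
    rcases mul_eq_zero.mp key2 with h | h
    · exact h
    · exact absurd h (by positivity)
  rcases eq_or_ne n 0 with rfl | hn0
  · -- -1 - 2m = 0 impossible
    have : (2 * m : ℝ) = -1 := by push_cast at key3 ⊢; linarith
    have : (2 * m : ℤ) = -1 := by exact_mod_cast this
    omega
  · apply ht
    refine ⟨-(2 * (m:ℚ) + 1) / (2 * (n:ℚ)), ?_⟩
    have hn0' : (2 * (n:ℝ)) ≠ 0 := by
      simp only [ne_eq, mul_eq_zero]
      push_neg
      exact ⟨two_ne_zero, Int.cast_ne_zero.mpr hn0⟩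
    push_cast
    field_simp
    nlinarith [key3]

/- ## Main theorem -/

/-- Integral coisotropic submanifolds are not stable under small coisotropic deformations:
`(t·sin x1, 0)` is a jointly smooth family of coisotropic pairs starting at `(0,0)`; at
`t = 0` the leaf through the origin is compact (a 2-torus), while for every irrational `t`
it is not compact; hence every neighborhood of `t = 0` contains values of `t` for which the
deformed coisotropic submanifold fails to be integral. -/
theorem integral_coisotropic_not_stable :
    (∀ t : ℝ, CoisotropicPair (fun p => t * Real.sin (p 0)) (fun _ => 0)) ∧
    ContDiff ℝ (⊤ : ℕ∞) (fun q : ℝ × (Fin 5 → ℝ) => q.1 * Real.sin (q.2 0)) ∧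
    ((fun p : Fin 5 → ℝ => (0 : ℝ) * Real.sin (p 0)) = fun _ => 0) ∧
    IsCompact (leafGroup 0) ∧
    (∀ t : ℝ, Irrational t → ¬ IsCompact (leafGroup t)) ∧
    (∀ δ : ℝ, 0 < δ → ∃ t : ℝ, |t| < δ ∧ ¬ IsCompact (leafGroup t)) := by
  refine ⟨coisopair, ?_, ?_, leaf_zero_compact, fun t ht => leaf_irrational_not_compact ht, ?_⟩
  · exact contDiff_fst.mul (Real.contDiff_sin.comp
      (((ContinuousLinearMap.proj 0 : (Fin 5 → ℝ) →L[ℝ] ℝ).contDiff).comp contDiff_snd))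
  · funext p; simp
  · intro δ hδ
    obtain ⟨r, hr, hr1, hr2⟩ := exists_irrational_btwn (show (0:ℝ) < δ from hδ)
    exact ⟨r, by rw [abs_of_pos hr1]; exact hr2, leaf_irrational_not_compact hr⟩
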